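/- arXiv:1602.04482 — 7 statements merged into one kernel-verified Lean document; each statement's English description precedes it below -/
import Mathlib

section
/- Let n, k, r, δ be integers with 0 < r < k ≤ n − ⌈k/r⌉(δ − 1) and δ ≥ 2. Set a = r⌈k/r⌉ − k, b = (r+δ−1)⌈n/(r+δ−1)⌉ − n, m = ⌈n/(r+δ−1)⌉ − 1, and v = r + δ − 1 − b − ⌊(r+δ−1−b)/m⌋·m, and assume b > a. Define d_new = n − k + 1 − min{v, ⌈k/r⌉ − 1} − (⌈k/r⌉ − 1)(⌊(r+δ−1−b)/m⌋ + δ − 1) and d_old = n − k + 1 − ⌈k/r⌉(δ − 1) + (b − r). Then d_new − d_old ≥ ⌊(r+δ−1−b)/m⌋ · (m − ⌈k/r⌉ + 1) ≥ 0. -/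
/-!
Write `K = ⌈k/r⌉` and `M = ⌈n/(r+δ-1)⌉ = m + 1`, so that `k + a = rK` and `n + b = (r+δ-1)M`.
Then `d_new - d_old = (v - min v (K-1)) + ⌊(r+δ-1-b)/m⌋ (m - K + 1)` is a ring identity,
and the first summand is nonnegative. For the second, `b > a` together with
`k + K(δ-1) ≤ n` gives `(r+δ-1)K = k + a + K(δ-1) < n + b = (r+δ-1)M`, so `m ≥ K`;
and `b < r+δ-1`, `m ≥ K > 0` make the floor nonnegative.
-/

namespace Int

variable {K : Type*} [Field K] [LinearOrder K] [IsStrictOrderedRing K] [FloorRing K]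

theorem le_mul_ceil_div (x d : ℤ) (hd : 0 < d) : x ≤ d * ⌈(x : K) / d⌉ := by
  have hd' : (0 : K) < d := by exact_mod_cast hd
  have h := Int.le_ceil ((x : K) / d)
  rw [div_le_iff₀ hd'] at h
  exact_mod_cast (mul_comm (d : K) _ ▸ h)

theorem mul_ceil_div_lt_add (x d : ℤ) (hd : 0 < d) : d * ⌈(x : K) / d⌉ < x + d := by
  have hd' : (0 : K) < d := by exact_mod_cast hd
  have h := Int.ceil_lt_add_one ((x : K) / d)
  rw [← sub_lt_iff_lt_add, lt_div_iff₀ hd'] at h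
  have : ((d * ⌈(x : K) / d⌉ : ℤ) : K) < ((x + d : ℤ) : K) := by push_cast; linarith
  exact_mod_cast this

end Int

/-- The new lower bound `d_new` for the maximal minimum distance of linear
`(n,k,r,δ)`-LRCs improves on the earlier bound `d_old`:
`d_new - d_old ≥ ⌊(r+δ-1-b)/m⌋ (m - ⌈k/r⌉ + 1) ≥ 0`. -/
theorem dnew_improves_dold
    (n k r δ : ℤ) (hr : 0 < r) (hrk : r < k) (hδ : 2 ≤ δ)
    (hkn : k ≤ n - ⌈(k : ℚ) / (r : ℚ)⌉ * (δ - 1))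
    (a b m v fl dnew dold : ℤ)
    (ha : a = r * ⌈(k : ℚ) / (r : ℚ)⌉ - k)
    (hb : b = (r + δ - 1) * ⌈(n : ℚ) / ((r : ℚ) + (δ : ℚ) - 1)⌉ - n)
    (hm : m = ⌈(n : ℚ) / ((r : ℚ) + (δ : ℚ) - 1)⌉ - 1)
    (hfl : fl = ⌊((r + δ - 1 - b : ℤ) : ℚ) / (m : ℚ)⌋)
    (hv : v = r + δ - 1 - b - fl * m)
    (hba : a < b)
    (hdnew : dnew = n - k + 1 - min v (⌈(k : ℚ) / (r : ℚ)⌉ - 1)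
      - (⌈(k : ℚ) / (r : ℚ)⌉ - 1) * (fl + δ - 1))
    (hdold : dold = n - k + 1 - ⌈(k : ℚ) / (r : ℚ)⌉ * (δ - 1) + (b - r)) :
    fl * (m - ⌈(k : ℚ) / (r : ℚ)⌉ + 1) ≤ dnew - dold ∧
      0 ≤ fl * (m - ⌈(k : ℚ) / (r : ℚ)⌉ + 1) := by
  set K := ⌈(k : ℚ) / (r : ℚ)⌉
  have hs : 0 < r + δ - 1 := by omega
  have hM : ⌈(n : ℚ) / ((r : ℚ) + (δ : ℚ) - 1)⌉ = ⌈(n : ℚ) / ((r + δ - 1 : ℤ) : ℚ)⌉ := by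
    push_cast; rfl
  rw [hM] at hb hm
  have hb_lt : b < r + δ - 1 := by
    have := Int.mul_ceil_div_lt_add (K := ℚ) n _ hs; omega
  have hK_pos : 0 < K := by
    have := Int.le_mul_ceil_div (K := ℚ) k r hr; nlinarith
  have hK_le_m : K ≤ m := by
    have hKM : (r + δ - 1) * K < (r + δ - 1) * (m + 1) := by nlinarith
    have := lt_of_mul_lt_mul_left hKM hs.le; omega
  have hfl_nonneg : 0 ≤ fl := by
    rw [hfl]
    exact Int.floor_nonneg.2 (div_nonneg (by exact_mod_cast (by omega : 0 ≤ r + δ - 1 - b))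
      (by exact_mod_cast (by omega : 0 ≤ m)))
  have hgap : dnew - dold = (v - min v (K - 1)) + fl * (m - K + 1) := by
    rw [hdnew, hdold, hv]; ring
  exact ⟨by linarith [min_le_left v (K - 1)], mul_nonneg hfl_nonneg (by omega)⟩
end

section
/- Let n, k, r, δ be integers with 0 < r < k ≤ n − ⌈k/r⌉(δ − 1) and δ ≥ 2, and set a = r⌈k/r⌉ − k and b = (r+δ−1)⌈n/(r+δ−1)⌉ − n. If b > a, then ⌈n/(r+δ−1)⌉ − 1 ≥ ⌈k/r⌉. -/
/-! With `m = ⌈k/r⌉`, `M = ⌈n/(r+δ-1)⌉` and `d = δ - 1`, the hypothesis `k + m d ≤ n` turns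
`a < b` into `(r + d) m ≤ r m - k + n < (r + d) M`, and `r + d > 0` cancels. -/

theorem lt_of_mul_sub_lt_mul_sub {R : Type*} [CommRing R] [LinearOrder R] [IsStrictOrderedRing R]
    {r d k n m M : R} (hs : 0 < r + d) (hkn : k + m * d ≤ n) (h : r * m - k < (r + d) * M - n) :
    m < M :=
  lt_of_mul_lt_mul_left (by linarith) hs.le

theorem ceil_ratio_bound_general
    (n k r δ : ℤ) (hr : 0 < r) (hδ : 2 ≤ δ)
    (hkn : k ≤ n - ⌈(k : ℚ) / (r : ℚ)⌉ * (δ - 1))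
    (a b : ℤ)
    (ha : a = r * ⌈(k : ℚ) / (r : ℚ)⌉ - k)
    (hb : b = (r + δ - 1) * ⌈(n : ℚ) / ((r : ℚ) + (δ : ℚ) - 1)⌉ - n)
    (hba : a < b) :
    ⌈(k : ℚ) / (r : ℚ)⌉ ≤ ⌈(n : ℚ) / ((r : ℚ) + (δ : ℚ) - 1)⌉ - 1 := by
  subst ha hb
  rw [add_sub_assoc] at hba
  exact Int.le_sub_one_of_lt <| lt_of_mul_sub_lt_mul_sub (d := δ - 1) (by omega) (by linarith) hba

/-- If `b > a`, then `⌈n/(r+δ-1)⌉ - 1 ≥ ⌈k/r⌉`. -/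
theorem ceil_ratio_bound
    (n k r δ : ℤ) (hr : 0 < r) (hrk : r < k) (hδ : 2 ≤ δ)
    (hkn : k ≤ n - ⌈(k : ℚ) / (r : ℚ)⌉ * (δ - 1))
    (a b : ℤ)
    (ha : a = r * ⌈(k : ℚ) / (r : ℚ)⌉ - k)
    (hb : b = (r + δ - 1) * ⌈(n : ℚ) / ((r : ℚ) + (δ : ℚ) - 1)⌉ - n)
    (hba : a < b) :
    ⌈(k : ℚ) / (r : ℚ)⌉ ≤ ⌈(n : ℚ) / ((r : ℚ) + (δ : ℚ) - 1)⌉ - 1 :=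
  ceil_ratio_bound_general n k r δ hr hδ hkn a b ha hb hba
end

section
/- Let m and t be natural numbers with 1 ≤ m and t ≤ m, let η : {1,…,m} → ℕ, and let s = Σ_{i=1}^m η(i). Then there exists a subset I ⊆ {1,…,m} with |I| = t such that Σ_{i∈I} η(i) ≥ t·⌊s/m⌋ + min{t, s − m·⌊s/m⌋}. -/
/-!
Take a `t`-element set `I` of maximal sum. By exchange, every value outside `I` is at most
every value inside `I`. Write `s = m q + r` with `r < m`. If every value in `I` exceeds `q`,
then `∑ I ≥ t (q + 1)`. Otherwise every value outside `I` is at most `q`, so the complement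
sums to at most `(m - t) q` and `∑ I ≥ s - (m - t) q = t q + r`.
-/

open Finset

section TopSubset

variable {ι : Type*} [Fintype ι] [DecidableEq ι]

theorem Finset.exists_card_eq_forall_notMem_le {α : Type*} [AddCommMonoid α] [LinearOrder α]
    [IsOrderedCancelAddMonoid α] (f : ι → α) {t : ℕ} (ht : t ≤ Fintype.card ι) :
    ∃ I : Finset ι, #I = t ∧ ∀ i ∈ I, ∀ j ∉ I, f j ≤ f i := by
  obtain ⟨I, hI, hmax⟩ := (powersetCard t (univ : Finset ι)).exists_max_image
    (fun I => ∑ i ∈ I, f i) (powersetCard_nonempty.2 (by simpa using ht))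
  rw [mem_powersetCard_univ] at hI
  refine ⟨I, hI, fun i hi j hj => ?_⟩
  have hswap : #(insert j (I.erase i)) = t := by
    rw [card_insert_of_notMem fun h => hj (mem_of_mem_erase h), card_erase_of_mem hi, hI]
    have : 0 < t := hI ▸ card_pos.2 ⟨i, hi⟩
    omega
  have hle := hmax _ (mem_powersetCard_univ.2 hswap)
  rw [sum_insert fun h => hj (mem_of_mem_erase h), ← add_sum_erase I f hi, add_comm (f j),
    add_comm (f i)] at hle
  exact le_of_add_le_add_left hle

theorem Finset.card_mul_div_add_min_mod_le_sum (f : ι → ℕ) (I : Finset ι)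
    (hI : ∀ i ∈ I, ∀ j ∉ I, f j ≤ f i) :
    #I * ((∑ i, f i) / Fintype.card ι) + min #I ((∑ i, f i) % Fintype.card ι) ≤
      ∑ i ∈ I, f i := by
  set q := (∑ i, f i) / Fintype.card ι
  by_cases hbig : ∀ i ∈ I, q + 1 ≤ f i
  · calc #I * q + min #I ((∑ i, f i) % Fintype.card ι) ≤ #I * (q + 1) := by
          rw [mul_add_one]; exact Nat.add_le_add_left (min_le_left _ _) _
      _ ≤ ∑ i ∈ I, f i := by simpa using card_nsmul_le_sum I f _ hbig
  · push Not at hbig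
    obtain ⟨i, hi, hfi⟩ := hbig
    have hcompl : ∑ j ∈ Iᶜ, f j ≤ #Iᶜ * q := by
      simpa using sum_le_card_nsmul Iᶜ f q fun j hj =>
        (hI i hi j (mem_compl.1 hj)).trans (by omega)
    have hdiv : Fintype.card ι * q + (∑ i, f i) % Fintype.card ι = ∑ i, f i :=
      Nat.div_add_mod _ _
    have hsplit := sum_add_sum_compl I f
    have hq : #I * q + #Iᶜ * q = Fintype.card ι * q := by rw [← add_mul, card_add_card_compl]
    have hmin := min_le_right #I ((∑ i, f i) % Fintype.card ι)
    omega

end TopSubset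

theorem exists_subset_sum_ge_avg_general
    (m t : ℕ) (ht : t ≤ m) (η : Fin m → ℕ) :
    ∃ I : Finset (Fin m), I.card = t ∧
      t * ((∑ i, η i) / m) + min t ((∑ i, η i) - m * ((∑ i, η i) / m)) ≤ ∑ i ∈ I, η i := by
  obtain ⟨I, hcard, hI⟩ :=
    exists_card_eq_forall_notMem_le η (ht.trans_eq (Fintype.card_fin m).symm)
  refine ⟨I, hcard, ?_⟩
  rw [← Nat.mod_eq_sub_mul_div, ← hcard]
  simpa using card_mul_div_add_min_mod_le_sum η I hI

/-- Averaging bound: for `η : Fin m → ℕ` with total sum `s`, there is a `t`-element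
subset `I` whose sum is at least `t⌊s/m⌋ + min{t, s - m⌊s/m⌋}`. -/
theorem exists_subset_sum_ge_avg
    (m t : ℕ) (hm : 1 ≤ m) (ht : t ≤ m) (η : Fin m → ℕ) :
    ∃ I : Finset (Fin m), I.card = t ∧
      t * ((∑ i, η i) / m) + min t ((∑ i, η i) - m * ((∑ i, η i) / m)) ≤ ∑ i ∈ I, η i :=
  exists_subset_sum_ge_avg_general m t ht η
end

section
/- Let n, k, r, δ be integers with 0 < r < k ≤ n − ⌈k/r⌉(δ − 1) and δ ≥ 2; set a = r⌈k/r⌉ − k, b = (r+δ−1)⌈n/(r+δ−1)⌉ − n, m' = ⌈n/(r+δ−1)⌉ − 1, and v = r + δ − 1 − b − ⌊(r+δ−1−b)/m'⌋·m', and assume b > a. Define d_b = n − k + 1 − ⌈k/r⌉(δ − 1) if δ − 1 ≤ (⌈k/r⌉ − 1)⌊(r+δ−1−b)/m'⌋ + min{v, ⌈k/r⌉ − 1}, and d_b = n − k + 1 − min{v, ⌈k/r⌉ − 1} − (⌈k/r⌉ − 1)(⌊(r+δ−1−b)/m'⌋ + δ − 1) otherwise. Suppose that no Construction-1 configuration with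 parameters (n, k, r, δ) has minimum-distance parameter d equal to n − k + 1 − (⌈k/r⌉ − 1)(δ − 1). Then every Construction-1 configuration with parameters (n, k, r, δ) has minimum-distance parameter d ≤ d_b. -/
open scoped BigOperators

/-- A Construction-1 configuration: a finite set `E ⊆ ℕ` covered by nonempty subsets
`F 0, …, F (m-1)`, a positive integer `k`, and ranks `ρ i` with `0 < ρ i < |F i|`,
such that `k ≤ |E| - ∑ η i` (where `η i = |F i| - ρ i`) and
`|F_{[m] \ {j}} ∩ F j| < ρ j` for all `j`. -/
structure Constr1Config where
  /-- the number of subsets -/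
  m : ℕ
  hm : 0 < m
  /-- the subsets `F i` -/
  F : Fin m → Finset ℕ
  /-- the dimension -/
  k : ℕ
  hk : 0 < k
  /-- the ranks of the subsets -/
  ρ : Fin m → ℕ
  hρpos : ∀ i, 0 < ρ i
  hρlt : ∀ i, ρ i < (F i).card
  hdim : (k : ℤ) ≤ ((Finset.univ.biUnion F).card : ℤ) - ∑ i, (((F i).card : ℤ) - (ρ i : ℤ))
  hint : ∀ j, (((Finset.univ.erase j).biUnion F) ∩ F j).card < ρ j

namespace Constr1Config

variable (c : Constr1Config)

/-- The ground set `E = F_[m]`. -/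
def E : Finset ℕ := Finset.univ.biUnion c.F

/-- The parameter `n = |E|`. -/
def n : ℕ := c.E.card

/-- The nullity `η i = |F i| - ρ i`. -/
def η (i : Fin c.m) : ℕ := (c.F i).card - c.ρ i

/-- The parameter `r = max_i ρ i`. -/
def r : ℕ := Finset.univ.sup c.ρ

/-- The parameter `δ = 1 + min_i η i`. -/
def δ : ℕ :=
  1 + Finset.univ.inf' ⟨⟨0, c.hm⟩, Finset.mem_univ _⟩ c.η

/-- The minimum-distance parameter
`d = n - k + 1 - max{∑_{i ∈ I} η i : |F_I| - ∑_{i ∈ I} η i < k}`. -/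
def d : ℤ :=
  (c.n : ℤ) - (c.k : ℤ) + 1 -
    (((Finset.univ.powerset.filter
        (fun I : Finset (Fin c.m) =>
          ((I.biUnion c.F).card : ℤ) - ∑ i ∈ I, (c.η i : ℤ) < (c.k : ℤ))).sup
        (fun I => ∑ i ∈ I, c.η i) : ℕ) : ℤ)

end Constr1Config

/-!
Write `S` for the maximum subtracted in `d`, so that `d = n - k + 1 - S`; every set of fewer than
`⌈k/r⌉` indices takes part in that maximum, since `|F_I| - ∑_{i ∈ I} η_i ≤ ∑_{i ∈ I} ρ_i < k`.

While some `η_i ≥ δ` and `n < m r + ∑ η`, two replacements keep `(n, k, r, δ)`, do not increase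
`S` and lower `∑ η`: delete from `F_i` an element that lies in no other `F_l`, then either add a new
element to some `F_j` with `ρ_j < r` (raising `ρ_j`), or, if all `ρ_j = r`, the `F_l` are not
disjoint and a shared element of some `F_q` is replaced by a new one. Neither replacement can
shrink any `|F_I| - ∑_{i ∈ I} η_i`.

In the resulting configuration either every `η_i = δ - 1`, and then `S` is a multiple of `δ - 1`
that is at least `(⌈k/r⌉ - 1)(δ - 1)` and, by hypothesis, different from it; or `n = m r + ∑ η`
with some `η_i ≥ δ`, so that `m ≤ m'`. In the second case, if the `⌈k/r⌉ - 1` largest `η_i` had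
sum below `(⌈k/r⌉ - 1)(δ - 1 + fl) + min v (⌈k/r⌉ - 1)`, all other `η_i` would be at most
`δ - 1 + fl`, forcing `n < m' (r + δ - 1 + fl) + v = n`.
-/

open Finset

namespace Finset

variable {ι α : Type*} [DecidableEq ι] [DecidableEq α]

theorem biUnion_eq_union_biUnion_erase (F : ι → Finset α) {I : Finset ι} {j : ι}
    (hj : j ∈ I) : I.biUnion F = F j ∪ (I.erase j).biUnion F := by
  conv_lhs => rw [← insert_erase hj, biUnion_insert]

theorem biUnion_update_of_mem (F : ι → Finset α) {I : Finset ι} {j : ι} (hj : j ∈ I)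
    (G : Finset α) : I.biUnion (Function.update F j G) = G ∪ (I.erase j).biUnion F := by
  rw [biUnion_eq_union_biUnion_erase _ hj, Function.update_self]
  exact congrArg _ <| biUnion_congr rfl fun l hl => Function.update_of_ne (ne_of_mem_erase hl) _ _

theorem biUnion_update_of_notMem (F : ι → Finset α) {I : Finset ι} {j : ι} (hj : j ∉ I)
    (G : Finset α) : I.biUnion (Function.update F j G) = I.biUnion F :=
  biUnion_congr rfl fun _ hl => Function.update_of_ne (ne_of_mem_of_not_mem hl hj) _ _

variable {F : ι → Finset α} {j : ι} {G : Finset α}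

theorem card_biUnion_sub_card_le_update (hG : ∀ l, G ∩ F l ⊆ F j) {I : Finset ι} (hj : j ∈ I) :
    (#(I.biUnion F) : ℤ) - #(F j) ≤ #(I.biUnion (Function.update F j G)) - #G := by
  set A := (I.erase j).biUnion F
  have hA : A \ F j ⊆ A \ G := fun a ha => by
    obtain ⟨haA, haF⟩ := mem_sdiff.1 ha
    obtain ⟨l, -, hal⟩ := mem_biUnion.1 haA
    exact mem_sdiff.2 ⟨haA, fun haG => haF (hG l (mem_inter.2 ⟨haG, hal⟩))⟩
  rw [biUnion_update_of_mem F hj, biUnion_eq_union_biUnion_erase F hj, union_comm, union_comm G,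
    ← card_sdiff_add_card, ← card_sdiff_add_card]
  push_cast
  linarith [(Nat.cast_le (α := ℤ)).2 (card_le_card hA)]

theorem card_biUnion_sub_sum_le_update (ρ : ι → ℕ) {ρ' : ℕ} (hG : ∀ l, G ∩ F l ⊆ F j)
    (hρ : ρ j ≤ ρ') (I : Finset ι) :
    (#(I.biUnion F) : ℤ) - ∑ i ∈ I, ((#(F i) : ℤ) - ρ i) ≤
      #(I.biUnion (Function.update F j G)) -
        ∑ i ∈ I, ((#(Function.update F j G i) : ℤ) - Function.update ρ j ρ' i) := by
  by_cases hj : j ∈ I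
  · simp only [Function.apply_update₂ (fun _ (s : Finset α) (r : ℕ) => (#s : ℤ) - r)]
    rw [sum_update_of_mem hj, sum_eq_add_sum_sdiff_singleton_of_mem hj]
    have := card_biUnion_sub_card_le_update hG hj
    have : (ρ j : ℤ) ≤ ρ' := by exact_mod_cast hρ
    linarith
  · rw [biUnion_update_of_notMem F hj]
    gcongr with i hi <;> rw [Function.update_of_ne (ne_of_mem_of_not_mem hi hj)]

theorem mem_of_mem_update_of_mem_update (hG : ∀ l, G ∩ F l ⊆ F j) {a : α} {l l' : ι}
    (hll' : l ≠ l') (ha : a ∈ Function.update F j G l) (ha' : a ∈ Function.update F j G l') :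
    a ∈ F l ∧ a ∈ F l' := by
  rcases eq_or_ne l j with rfl | hl
  · rw [Function.update_self] at ha
    rw [Function.update_of_ne hll'.symm] at ha'
    exact ⟨hG l' (mem_inter.2 ⟨ha, ha'⟩), ha'⟩
  rcases eq_or_ne l' j with rfl | hl'
  · rw [Function.update_self] at ha'
    rw [Function.update_of_ne hll'] at ha
    exact ⟨ha, hG l (mem_inter.2 ⟨ha', ha⟩)⟩
  rw [Function.update_of_ne hl] at ha
  rw [Function.update_of_ne hl'] at ha'
  exact ⟨ha, ha'⟩

theorem biUnion_update_inter_update_subset (hG : ∀ l, G ∩ F l ⊆ F j) {s : Finset ι} {l : ι}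
    (hl : l ∉ s) :
    s.biUnion (Function.update F j G) ∩ Function.update F j G l ⊆ s.biUnion F ∩ F l := by
  intro a ha
  obtain ⟨ha₁, ha₂⟩ := mem_inter.1 ha
  obtain ⟨l', hl', ha'⟩ := mem_biUnion.1 ha₁
  obtain ⟨h₁, h₂⟩ := mem_of_mem_update_of_mem_update hG (ne_of_mem_of_not_mem hl' hl) ha' ha₂
  exact mem_inter.2 ⟨mem_biUnion.2 ⟨l', hl', h₁⟩, h₂⟩

theorem exists_subset_card_eq_forall_sdiff_le {β : Type*} [LinearOrder β] (s : Finset ι)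
    (f : ι → β) {p : ℕ} (hp : p ≤ #s) :
    ∃ T ⊆ s, #T = p ∧ ∀ x ∈ s \ T, ∀ y ∈ T, f x ≤ f y := by
  induction p with
  | zero => exact ⟨∅, empty_subset s, card_empty, by simp⟩
  | succ p ih =>
    obtain ⟨T, hTs, hT, htop⟩ := ih (by omega)
    have hne : (s \ T).Nonempty := by
      rw [← card_pos, card_sdiff_of_subset hTs]
      omega
    obtain ⟨a, ha, hmax⟩ := exists_max_image (s \ T) f hne
    obtain ⟨has, haT⟩ := mem_sdiff.1 ha
    refine ⟨insert a T, insert_subset has hTs, by rw [card_insert_of_notMem haT, hT],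
      fun x hx y hy => ?_⟩
    obtain ⟨hxs, hxT⟩ := mem_sdiff.1 hx
    have hx' : x ∈ s \ T := mem_sdiff.2 ⟨hxs, fun h => hxT (mem_insert_of_mem h)⟩
    obtain rfl | hy := mem_insert.1 hy
    exacts [hmax x hx', htop x hx' y hy]

theorem sum_le_sum_add_card_sdiff_mul {s T : Finset ι} (hT : T ⊆ s) {f : ι → ℤ}
    (htop : ∀ x ∈ s \ T, ∀ y ∈ T, f x ≤ f y) {q : ℤ} (hlt : ∑ i ∈ T, f i < #T * (q + 1)) :
    ∑ i ∈ s, f i ≤ ∑ i ∈ T, f i + #(s \ T) * q := by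
  obtain ⟨y, hy, hfy⟩ := exists_lt_of_sum_lt (g := fun _ => q + 1) (by simpa using hlt)
  have hout := sum_le_card_nsmul (s \ T) f q fun x hx => (htop x hx y hy).trans (by omega)
  rw [nsmul_eq_mul] at hout
  rw [← sum_sdiff hT]
  linarith

end Finset

theorem Int.mul_ceil_div_sub_one_lt {a b : ℤ} (hb : 0 < b) : b * (⌈(a : ℚ) / b⌉ - 1) < a := by
  have h : (⌈(a : ℚ) / b⌉ : ℚ) - 1 < a / b := by
    linarith [Int.ceil_lt_add_one ((a : ℚ) / b)]
  rw [lt_div_iff₀ (by exact_mod_cast hb)] at h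
  exact_mod_cast (by push_cast; linarith : ((b * (⌈(a : ℚ) / b⌉ - 1) : ℤ) : ℚ) < a)

theorem Int.le_mul_ceil_div_s8 {a b : ℤ} (hb : 0 < b) : a ≤ b * ⌈(a : ℚ) / b⌉ := by
  have h := Int.le_ceil ((a : ℚ) / b)
  rw [div_le_iff₀ (by exact_mod_cast hb)] at h
  exact_mod_cast (by push_cast; linarith : (a : ℚ) ≤ ((b * ⌈(a : ℚ) / b⌉ : ℤ) : ℚ))

theorem Int.exists_natCast_eq_ceil_div_sub_one {k r : ℤ} (hk : 0 < k) (hr : 0 < r) :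
    ∃ s : ℕ, (s : ℤ) = ⌈(k : ℚ) / r⌉ - 1 ∧ r * s < k := by
  have hkt := Int.le_mul_ceil_div_s8 (a := k) hr
  have : 0 < ⌈(k : ℚ) / r⌉ := pos_of_mul_pos_right (by linarith) hr.le
  exact ⟨(⌈(k : ℚ) / r⌉ - 1).toNat, Int.toNat_of_nonneg (by omega),
    by rw [Int.toNat_of_nonneg (by omega)]; exact Int.mul_ceil_div_sub_one_lt hr⟩

theorem Int.eq_mul_add_of_ceil_floor {n q b m' fl v : ℤ} (hn : 0 < n) (hq : 0 < q)
    (hb : b = q * ⌈(n : ℚ) / q⌉ - n) (hm : m' = ⌈(n : ℚ) / q⌉ - 1)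
    (hfl : fl = ⌊((q - b : ℤ) : ℚ) / m'⌋) (hv : v = q - b - fl * m') :
    n ≤ (m' + 1) * q ∧ 0 ≤ fl ∧ m' * (q + fl) + v = n := by
  have hceil : ⌈(n : ℚ) / q⌉ = m' + 1 := by omega
  have hnm := Int.mul_ceil_div_sub_one_lt (a := n) hq
  have hmn := Int.le_mul_ceil_div_s8 (a := n) hq
  rw [hceil] at hnm hmn
  have hm0 : 0 ≤ m' := by
    have : 0 < m' + 1 := pos_of_mul_pos_right (a := q) (by linarith) hq.le
    omega
  have hR : 0 ≤ q - b := by rw [hb, hceil]; linarith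
  refine ⟨by linarith, hfl ▸ Int.floor_nonneg.2 (div_nonneg (by exact_mod_cast hR)
    (by exact_mod_cast hm0)), ?_⟩
  rw [hv, hb, hceil]
  ring

namespace Constr1Config

variable (c : Constr1Config)

def reducedCard (I : Finset (Fin c.m)) : ℤ := #(I.biUnion c.F) - ∑ i ∈ I, (c.η i : ℤ)

def maxNullity : ℕ :=
  (univ.powerset.filter fun I : Finset (Fin c.m) => c.reducedCard I < c.k).sup fun I =>
    ∑ i ∈ I, c.η i

theorem d_eq : c.d = c.n - c.k + 1 - c.maxNullity := rfl

theorem card_F_eq (i : Fin c.m) : #(c.F i) = c.ρ i + c.η i := by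
  have := c.hρlt i
  unfold η
  omega

theorem η_cast (i : Fin c.m) : (c.η i : ℤ) = #(c.F i) - c.ρ i := by
  rw [card_F_eq]
  push_cast
  ring

theorem one_le_η (i : Fin c.m) : 1 ≤ c.η i := by
  have := c.hρlt i
  rw [card_F_eq] at this
  omega

theorem ρ_le_r (i : Fin c.m) : c.ρ i ≤ c.r := le_sup (mem_univ i)

theorem sum_ρ_le_card_mul_r (I : Finset (Fin c.m)) : ∑ i ∈ I, c.ρ i ≤ #I * c.r := by
  simpa using sum_le_sum fun i (_ : i ∈ I) => c.ρ_le_r i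

theorem δ_le_one_add_η (i : Fin c.m) : c.δ ≤ 1 + c.η i :=
  Nat.add_le_add_left (inf'_le _ (mem_univ i)) 1

theorem two_le_δ : 2 ≤ c.δ :=
  Nat.add_le_add_left (le_inf' _ _ fun i _ => c.one_le_η i) 1

theorem reducedCard_eq (I : Finset (Fin c.m)) :
    c.reducedCard I = #(I.biUnion c.F) - ∑ i ∈ I, ((#(c.F i) : ℤ) - c.ρ i) := by
  simp only [reducedCard, η_cast]

theorem k_le_reducedCard_univ : (c.k : ℤ) ≤ c.reducedCard univ := by
  rw [reducedCard_eq]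
  exact c.hdim

theorem k_le_n : c.k ≤ c.n := by
  have := c.k_le_reducedCard_univ
  have : (0 : ℤ) ≤ ∑ i, (c.η i : ℤ) := sum_nonneg fun i _ => Int.natCast_nonneg _
  simp only [reducedCard, n, E] at *
  omega

theorem reducedCard_le_sum_ρ (I : Finset (Fin c.m)) :
    c.reducedCard I ≤ ∑ i ∈ I, (c.ρ i : ℤ) := by
  have : (#(I.biUnion c.F) : ℤ) ≤ ∑ i ∈ I, (#(c.F i) : ℤ) := by exact_mod_cast card_biUnion_le
  rw [reducedCard_eq, sum_sub_distrib]
  linarith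

theorem n_le : c.n ≤ c.m * c.r + ∑ i, c.η i :=
  calc c.n ≤ ∑ i, #(c.F i) := card_biUnion_le
    _ = ∑ i, c.ρ i + ∑ i, c.η i := by
      rw [← sum_add_distrib]
      exact sum_congr rfl fun i _ => c.card_F_eq i
    _ ≤ c.m * c.r + ∑ i, c.η i := by simpa using c.sum_ρ_le_card_mul_r univ

theorem sum_η_le_maxNullity {I : Finset (Fin c.m)} (hI : c.reducedCard I < c.k) :
    ∑ i ∈ I, c.η i ≤ c.maxNullity :=
  le_sup (f := fun I => ∑ i ∈ I, c.η i) (mem_filter.2 ⟨mem_powerset.2 (subset_univ I), hI⟩)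

theorem sum_η_le_maxNullity_of_card_mul_r_lt {I : Finset (Fin c.m)} (hI : #I * c.r < c.k) :
    ∑ i ∈ I, c.η i ≤ c.maxNullity := by
  refine c.sum_η_le_maxNullity ((c.reducedCard_le_sum_ρ I).trans_lt ?_)
  exact_mod_cast (c.sum_ρ_le_card_mul_r I).trans_lt hI

theorem exists_sum_η_eq_maxNullity :
    ∃ I, c.reducedCard I < c.k ∧ ∑ i ∈ I, c.η i = c.maxNullity := by
  have hne : (univ.powerset.filter fun I : Finset (Fin c.m) => c.reducedCard I < c.k).Nonempty :=
    ⟨∅, mem_filter.2 ⟨empty_mem_powerset _, by simp [reducedCard, c.hk]⟩⟩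
  obtain ⟨I, hI, hsup⟩ := exists_mem_eq_sup _ hne fun I => ∑ i ∈ I, c.η i
  exact ⟨I, (mem_filter.1 hI).2, hsup.symm⟩

theorem lt_m_of_mul_r_lt {s : ℕ} (hs : s * c.r < c.k) : s < c.m := by
  have hk : c.k ≤ ∑ i, c.ρ i := by
    exact_mod_cast c.k_le_reducedCard_univ.trans (c.reducedCard_le_sum_ρ univ)
  have := c.sum_ρ_le_card_mul_r univ
  rw [card_univ, Fintype.card_fin] at this
  exact Nat.lt_of_mul_lt_mul_right (hs.trans_le (hk.trans this))

theorem exists_notMem_biUnion_erase (i : Fin c.m) :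
    ∃ y ∈ c.F i, y ∉ (univ.erase i).biUnion c.F := by
  by_contra! h
  have := c.hint i
  rw [inter_eq_right.2 h] at this
  exact this.not_gt (c.hρlt i)

section Replace

variable {c} {j : Fin c.m} {G : Finset ℕ} {ρ' : ℕ}

abbrev replace (j : Fin c.m) (G : Finset ℕ) (ρ' : ℕ) (hG : ∀ l, G ∩ c.F l ⊆ c.F j)
    (hρ : c.ρ j ≤ ρ') (hlt : ρ' < #G) : Constr1Config where
  m := c.m
  hm := c.hm
  F := Function.update c.F j G
  k := c.k
  hk := c.hk
  ρ := Function.update c.ρ j ρ'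
  hρpos l := by
    rcases eq_or_ne l j with rfl | hl
    · simpa using (c.hρpos l).trans_le hρ
    · simpa [hl] using c.hρpos l
  hρlt l := by
    rcases eq_or_ne l j with rfl | hl
    · simpa using hlt
    · simpa [hl] using c.hρlt l
  hdim := c.k_le_reducedCard_univ.trans <|
    (c.reducedCard_eq univ).trans_le (card_biUnion_sub_sum_le_update c.ρ hG hρ univ)
  hint l := by
    refine (card_le_card (biUnion_update_inter_update_subset hG (notMem_erase l univ))).trans_lt
      ((c.hint l).trans_le ?_)
    rcases eq_or_ne l j with rfl | hl
    · simpa using hρ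
    · simp [hl]

variable (hG : ∀ l, G ∩ c.F l ⊆ c.F j) (hρ : c.ρ j ≤ ρ') (hlt : ρ' < #G)

theorem replace_E : (c.replace j G ρ' hG hρ hlt).E = G ∪ (univ.erase j).biUnion c.F :=
  biUnion_update_of_mem c.F (mem_univ j) G

theorem replace_η : (c.replace j G ρ' hG hρ hlt).η = Function.update c.η j (#G - ρ') := by
  funext l
  by_cases hl : l = j <;> simp [η, hl]

theorem sum_η_replace :
    ∑ l, (c.replace j G ρ' hG hρ hlt).η l + c.η j = ∑ l, c.η l + (#G - ρ') := by
  rw [replace_η, sum_update_of_mem (mem_univ j), ← add_sum_erase _ _ (mem_univ j),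
    sdiff_singleton_eq_erase]
  ring

theorem replace_r (hρr : ρ' ≤ c.r) : (c.replace j G ρ' hG hρ hlt).r = c.r := by
  refine le_antisymm (Finset.sup_le fun l _ => ?_) (sup_mono_fun fun l _ => ?_)
  · by_cases hl : l = j
    · simpa [hl] using hρr
    · simpa [hl] using c.ρ_le_r l
  · by_cases hl : l = j
    · simpa [hl] using hρ
    · simp [hl]

theorem replace_η_le (hη : #G - ρ' ≤ c.η j) (l : Fin c.m) :
    (c.replace j G ρ' hG hρ hlt).η l ≤ c.η l := by
  by_cases hl : l = j <;> simp [replace_η, hl, hη]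

theorem replace_δ (hδ : c.δ ≤ 1 + (#G - ρ')) (hη : #G - ρ' ≤ c.η j) :
    (c.replace j G ρ' hG hρ hlt).δ = c.δ := by
  refine congrArg (1 + ·) (le_antisymm (inf'_mono_fun fun l _ => replace_η_le hG hρ hlt hη l)
    (le_inf' _ _ fun l _ => ?_))
  by_cases hl : l = j
  · simp only [replace_η, hl, Function.update_self]
    exact Nat.le_of_add_le_add_left hδ
  · simpa [replace_η, hl] using inf'_le c.η (mem_univ l)

theorem reducedCard_le_replace (I : Finset (Fin c.m)) :
    c.reducedCard I ≤ (c.replace j G ρ' hG hρ hlt).reducedCard I := by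
  rw [reducedCard_eq, reducedCard_eq]
  exact card_biUnion_sub_sum_le_update c.ρ hG hρ I

theorem maxNullity_replace_le (hη : #G - ρ' ≤ c.η j) :
    (c.replace j G ρ' hG hρ hlt).maxNullity ≤ c.maxNullity := by
  obtain ⟨I, hI, hsum⟩ := (c.replace j G ρ' hG hρ hlt).exists_sum_η_eq_maxNullity
  rw [← hsum]
  exact (sum_le_sum fun l _ => replace_η_le hG hρ hlt hη l).trans
    (c.sum_η_le_maxNullity ((reducedCard_le_replace hG hρ hlt I).trans_lt hI))

end Replace

theorem n_eq_of_disjoint (hd : ∀ p q, p ≠ q → Disjoint (c.F p) (c.F q))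
    (hρ : ∀ i, c.ρ i = c.r) : c.n = c.m * c.r + ∑ i, c.η i := by
  rw [n, E, card_biUnion fun p _ q _ hpq => hd p q hpq]
  simp [card_F_eq, hρ, sum_add_distrib]

theorem exists_shrink_of_δ_le_η {i : Fin c.m} (hi : c.δ ≤ c.η i) :
    ∃ c' : Constr1Config, c'.m = c.m ∧ c'.n + 1 = c.n ∧ c'.k = c.k ∧ c'.r = c.r ∧
      c'.δ = c.δ ∧ ∑ l, c'.η l + 1 = ∑ l, c.η l ∧ c'.maxNullity ≤ c.maxNullity := by
  obtain ⟨y, hy, hy'⟩ := c.exists_notMem_biUnion_erase i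
  have hcard : #((c.F i).erase y) + 1 = c.ρ i + c.η i := by rw [card_erase_add_one hy, card_F_eq]
  have hδ := c.two_le_δ
  have hG (l : Fin c.m) : (c.F i).erase y ∩ c.F l ⊆ c.F i :=
    inter_subset_left.trans (erase_subset y _)
  have hlt : c.ρ i < #((c.F i).erase y) := by omega
  have hE : (c.replace i _ _ hG le_rfl hlt).E = c.E.erase y := by
    rw [replace_E, E, biUnion_eq_union_biUnion_erase c.F (mem_univ i), erase_union_distrib,
      erase_eq_of_notMem hy']
  refine ⟨c.replace i _ _ hG le_rfl hlt, rfl, ?_, rfl, replace_r _ _ _ (c.ρ_le_r i),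
    replace_δ _ _ _ (by omega) (by omega), ?_, maxNullity_replace_le _ _ _ (by omega)⟩
  · rw [n, n, hE, card_erase_add_one (show y ∈ c.E from mem_biUnion.2 ⟨i, mem_univ i, hy⟩)]
  · have := sum_η_replace hG le_rfl hlt
    omega

theorem exists_grow_of_replace_insert {j : Fin c.m} {z : ℕ} (hz : z ∉ c.E) {G₀ : Finset ℕ}
    (hG₀ : G₀ ⊆ c.F j) (hcov : c.F j ⊆ G₀ ∪ (univ.erase j).biUnion c.F) {ρ' : ℕ}
    (hρ : c.ρ j ≤ ρ') (hρr : ρ' ≤ c.r) (hcard : #G₀ + 1 = ρ' + c.η j) :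
    ∃ c' : Constr1Config, c'.n = c.n + 1 ∧ c'.k = c.k ∧ c'.r = c.r ∧ c'.δ = c.δ ∧
      ∑ l, c'.η l = ∑ l, c.η l ∧ c'.maxNullity ≤ c.maxNullity := by
  have hzF (l : Fin c.m) : z ∉ c.F l := fun h => hz (mem_biUnion.2 ⟨l, mem_univ l, h⟩)
  have hG (l : Fin c.m) : insert z G₀ ∩ c.F l ⊆ c.F j := fun a ha => by
    obtain ⟨ha, hal⟩ := mem_inter.1 ha
    obtain rfl | ha := mem_insert.1 ha
    exacts [absurd hal (hzF l), hG₀ ha]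
  have hcard' : #(insert z G₀) = ρ' + c.η j := by
    rw [card_insert_of_notMem fun h => hzF j (hG₀ h), hcard]
  have := c.one_le_η j
  have := c.δ_le_one_add_η j
  have hlt : ρ' < #(insert z G₀) := by omega
  have hE : (c.replace j _ _ hG hρ hlt).E = insert z c.E := by
    rw [replace_E, insert_union, E, biUnion_eq_union_biUnion_erase c.F (mem_univ j)]
    exact congrArg _ (subset_antisymm (union_subset_union_left hG₀)
      (union_subset hcov subset_union_right))
  refine ⟨c.replace j _ _ hG hρ hlt, ?_, rfl, replace_r _ _ _ hρr,
    replace_δ _ _ _ (by omega) (by omega), ?_, maxNullity_replace_le _ _ _ (by omega)⟩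
  · rw [n, n, hE, card_insert_of_notMem hz]
  · have := sum_η_replace hG hρ hlt
    omega

theorem exists_grow_of_n_lt (h : c.n < c.m * c.r + ∑ l, c.η l) :
    ∃ c' : Constr1Config, c'.n = c.n + 1 ∧ c'.k = c.k ∧ c'.r = c.r ∧ c'.δ = c.δ ∧
      ∑ l, c'.η l = ∑ l, c.η l ∧ c'.maxNullity ≤ c.maxNullity := by
  obtain ⟨z, hz⟩ := Infinite.exists_notMem_finset c.E
  by_cases hρ : ∃ j, c.ρ j < c.r
  · obtain ⟨j, hj⟩ := hρ
    exact c.exists_grow_of_replace_insert (j := j) hz subset_rfl subset_union_left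
      (ρ' := c.ρ j + 1) (by omega) hj (by rw [card_F_eq]; ring)
  push Not at hρ
  obtain ⟨p, q, hpq, x, hxp, hxq⟩ : ∃ p q, p ≠ q ∧ ∃ x ∈ c.F p, x ∈ c.F q := by
    by_contra! hdisj
    have := c.n_eq_of_disjoint (fun p q hpq => disjoint_left.2 (hdisj p q hpq))
      fun i => (c.ρ_le_r i).antisymm (hρ i)
    omega
  refine c.exists_grow_of_replace_insert hz (erase_subset x _) (fun a ha => ?_) le_rfl
    (c.ρ_le_r q) (by rw [card_erase_add_one hxq, card_F_eq])
  by_cases hax : a = x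
  · exact mem_union_right _ (mem_biUnion.2 ⟨p, mem_erase.2 ⟨hpq, mem_univ p⟩, hax ▸ hxp⟩)
  · exact mem_union_left _ (mem_erase.2 ⟨hax, ha⟩)

theorem exists_reduced : ∃ c' : Constr1Config, c'.n = c.n ∧ c'.k = c.k ∧ c'.r = c.r ∧
    c'.δ = c.δ ∧ c'.maxNullity ≤ c.maxNullity ∧
    ((∃ i, c'.δ ≤ c'.η i) → c'.n = c'.m * c'.r + ∑ i, c'.η i) := by
  induction hN : ∑ i, c.η i using Nat.strong_induction_on generalizing c with
  | _ N ih =>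
  by_cases h : (∃ i, c.δ ≤ c.η i) ∧ c.n < c.m * c.r + ∑ i, c.η i
  · obtain ⟨⟨i, hi⟩, hlt⟩ := h
    obtain ⟨c₁, hm₁, hn₁, hk₁, hr₁, hδ₁, hη₁, hS₁⟩ := c.exists_shrink_of_δ_le_η hi
    have hmr : c₁.m * c₁.r = c.m * c.r := by rw [hm₁, hr₁]
    obtain ⟨c₂, hn₂, hk₂, hr₂, hδ₂, hη₂, hS₂⟩ := c₁.exists_grow_of_n_lt (by omega)
    obtain ⟨c', hn', hk', hr', hδ', hS', hred⟩ := ih _ (by omega) c₂ rfl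
    exact ⟨c', by omega, by omega, by omega, by omega, by omega, hred⟩
  · exact ⟨c, rfl, rfl, rfl, rfl, le_rfl,
      fun hi => c.n_le.antisymm (not_lt.1 fun hlt => h ⟨hi, hlt⟩)⟩

theorem succ_mul_le_maxNullity_of_η_eq (hη : ∀ i, c.η i + 1 = c.δ) {s : ℕ} (hs : s * c.r < c.k)
    (hne : (c.maxNullity : ℤ) ≠ s * (c.δ - 1)) : ((s : ℤ) + 1) * (c.δ - 1) ≤ c.maxNullity := by
  have hsum (I : Finset (Fin c.m)) : (∑ i ∈ I, c.η i : ℤ) = #I * ((c.δ : ℤ) - 1) := by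
    rw [sum_congr rfl fun i _ => (show (c.η i : ℤ) = c.δ - 1 by have := hη i; omega), sum_const,
      nsmul_eq_mul]
  obtain ⟨I, -, hI⟩ := exists_subset_card_eq
    (show s ≤ #(univ : Finset (Fin c.m)) by simpa using (c.lt_m_of_mul_r_lt hs).le)
  have hlow : (∑ i ∈ I, c.η i : ℤ) ≤ c.maxNullity := by
    exact_mod_cast c.sum_η_le_maxNullity_of_card_mul_r_lt (hI ▸ hs)
  obtain ⟨J, -, hJ⟩ := c.exists_sum_η_eq_maxNullity
  have hJ' : (c.maxNullity : ℤ) = #J * ((c.δ : ℤ) - 1) := by rw [← hJ]; push_cast; exact hsum J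
  rw [hsum, hI] at hlow
  rw [hJ'] at hne hlow ⊢
  have hδ : (0 : ℤ) ≤ c.δ - 1 := by have := c.two_le_δ; omega
  have hsJ : (s : ℤ) < #J := lt_of_mul_lt_mul_right (lt_of_le_of_ne hlow hne.symm) hδ
  exact mul_le_mul_of_nonneg_right (by omega) hδ

theorem le_maxNullity_of_n_eq (hn : c.n = c.m * c.r + ∑ i, c.η i) (hi : ∃ i, c.δ ≤ c.η i)
    {s : ℕ} (hs : s * c.r < c.k) {m' fl v : ℤ} (hm' : (c.n : ℤ) ≤ (m' + 1) * (c.r + c.δ - 1))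
    (hfl : 0 ≤ fl) (hv : m' * (c.r + c.δ - 1 + fl) + v ≤ c.n) :
    s * ((c.δ : ℤ) - 1 + fl) + min v s ≤ c.maxNullity := by
  obtain ⟨i, hi⟩ := hi
  have hsum : (c.m : ℤ) * (c.δ - 1) < ∑ l, (c.η l : ℤ) :=
    calc (c.m : ℤ) * (c.δ - 1) = ∑ _l : Fin c.m, ((c.δ : ℤ) - 1) := by
          rw [sum_const, card_univ, Fintype.card_fin, nsmul_eq_mul]
      _ < ∑ l, (c.η l : ℤ) := sum_lt_sum (fun l _ => by have := c.δ_le_one_add_η l; omega)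
        ⟨i, mem_univ i, by omega⟩
  have hn' : (c.n : ℤ) = c.m * c.r + ∑ l, (c.η l : ℤ) := by exact_mod_cast hn
  have hm : (c.m : ℤ) ≤ m' := by
    have : (c.m : ℤ) * (c.r + c.δ - 1) < (m' + 1) * (c.r + c.δ - 1) := by linarith
    have := lt_of_mul_lt_mul_right this (by have := c.two_le_δ; omega)
    omega
  have hsm := c.lt_m_of_mul_r_lt hs
  obtain ⟨T, -, hT, htop⟩ := exists_subset_card_eq_forall_sdiff_le univ (fun l => (c.η l : ℤ))
    (p := s) (by simpa using hsm.le)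
  have hβ : (∑ l ∈ T, c.η l : ℤ) ≤ c.maxNullity := by
    exact_mod_cast c.sum_η_le_maxNullity_of_card_mul_r_lt (hT ▸ hs)
  by_contra! hlt
  have hmin := min_le_left v s
  have hmin' := min_le_right v s
  have hrest := sum_le_sum_add_card_sdiff_mul (subset_univ T) htop (q := c.δ - 1 + fl)
    (by rw [hT]; linarith)
  rw [card_sdiff_of_subset (subset_univ T), card_univ, Fintype.card_fin, hT,
    Nat.cast_sub hsm.le] at hrest
  have : (c.m : ℤ) * (c.r + c.δ - 1 + fl) ≤ m' * (c.r + c.δ - 1 + fl) :=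
    mul_le_mul_of_nonneg_right hm (by have := c.two_le_δ; omega)
  linarith

theorem d_le_of_no_perfect {s : ℕ} (hs : s * c.r < c.k) {m' fl v : ℤ}
    (hm' : (c.n : ℤ) ≤ (m' + 1) * (c.r + c.δ - 1)) (hfl : 0 ≤ fl)
    (hv : m' * (c.r + c.δ - 1 + fl) + v = c.n)
    (hperfect : ∀ c' : Constr1Config, c'.n = c.n → c'.k = c.k → c'.r = c.r → c'.δ = c.δ →
      c'.d ≠ c.n - c.k + 1 - s * (c.δ - 1)) :
    c.d ≤ c.n - c.k + 1 - (s * ((c.δ : ℤ) - 1) + min ((c.δ : ℤ) - 1) (s * fl + min v s)) := by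
  obtain ⟨c', hn, hk, hr, hδ, hS, hred⟩ := c.exists_reduced
  have hS' : (c'.maxNullity : ℤ) ≤ c.maxNullity := by exact_mod_cast hS
  simp only [← hn, ← hk, ← hr, ← hδ] at hm' hv hperfect hs ⊢
  suffices s * ((c'.δ : ℤ) - 1) + min ((c'.δ : ℤ) - 1) (s * fl + min v s) ≤ c'.maxNullity by
    rw [c.d_eq, ← hn, ← hk]
    linarith
  by_cases hi : ∃ i, c'.δ ≤ c'.η i
  · have := c'.le_maxNullity_of_n_eq (hred hi) hi hs hm' hfl hv.le
    linarith [min_le_right ((c'.δ : ℤ) - 1) (s * fl + min v s)]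
  · push Not at hi
    have hne : (c'.maxNullity : ℤ) ≠ s * (c'.δ - 1) := fun h =>
      hperfect c' rfl rfl rfl rfl (by rw [c'.d_eq, h])
    have := c'.succ_mul_le_maxNullity_of_η_eq
      (fun i => by have := c'.δ_le_one_add_η i; have := hi i; omega) hs hne
    linarith [min_le_left ((c'.δ : ℤ) - 1) (s * fl + min v s)]

end Constr1Config

theorem constr1_d_le_db_of_no_perfect_general
    (n k r δ : ℤ) (hr : 0 < r)
    (b m' v fl db : ℤ)
    (hb : b = (r + δ - 1) * ⌈(n : ℚ) / ((r : ℚ) + (δ : ℚ) - 1)⌉ - n)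
    (hm : m' = ⌈(n : ℚ) / ((r : ℚ) + (δ : ℚ) - 1)⌉ - 1)
    (hfl : fl = ⌊((r + δ - 1 - b : ℤ) : ℚ) / (m' : ℚ)⌋)
    (hv : v = r + δ - 1 - b - fl * m')
    (hdb : db = if δ - 1 ≤ (⌈(k : ℚ) / (r : ℚ)⌉ - 1) * fl + min v (⌈(k : ℚ) / (r : ℚ)⌉ - 1)
      then n - k + 1 - ⌈(k : ℚ) / (r : ℚ)⌉ * (δ - 1)
      else n - k + 1 - min v (⌈(k : ℚ) / (r : ℚ)⌉ - 1)
        - (⌈(k : ℚ) / (r : ℚ)⌉ - 1) * (fl + δ - 1))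
    (hnoperfect : ∀ c : Constr1Config,
      (c.n : ℤ) = n → (c.k : ℤ) = k → (c.r : ℤ) = r → (c.δ : ℤ) = δ →
      c.d ≠ n - k + 1 - (⌈(k : ℚ) / (r : ℚ)⌉ - 1) * (δ - 1)) :
    ∀ c : Constr1Config,
      (c.n : ℤ) = n → (c.k : ℤ) = k → (c.r : ℤ) = r → (c.δ : ℤ) = δ →
      c.d ≤ db := by
  rintro c rfl rfl rfl rfl
  have hδ := c.two_le_δ
  obtain ⟨s, hs, hsr⟩ :=
    Int.exists_natCast_eq_ceil_div_sub_one (k := c.k) (by exact_mod_cast c.hk) hr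
  rw [show (((c.r : ℤ) : ℚ) + ((c.δ : ℤ) : ℚ) - 1) = ((c.r + c.δ - 1 : ℤ) : ℚ) by push_cast; ring]
    at hb hm
  obtain ⟨hm', hfl0, hv'⟩ := Int.eq_mul_add_of_ceil_floor
    (by exact_mod_cast c.hk.trans_le c.k_le_n) (by omega) hb hm hfl hv
  have hd := c.d_le_of_no_perfect (s := s) (by exact_mod_cast (mul_comm _ _).trans_lt hsr) hm'
    hfl0 hv' fun c' hn hk hr hδ' => by
      simpa [hn, hk, hr, hδ', hs] using hnoperfect c'
  rw [hdb, show ⌈((c.k : ℤ) : ℚ) / ((c.r : ℤ) : ℚ)⌉ = s + 1 by omega, add_sub_cancel_right]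
  split_ifs with h
  · rw [min_eq_left h] at hd
    linarith
  · rw [min_eq_right (le_of_not_ge h)] at hd
    linarith

/-- If no Construction-1 configuration with parameters `(n,k,r,δ)` attains the
generalized Singleton bound, then every Construction-1 configuration with these
parameters has minimum-distance parameter at most the bound `d_b` of Theorem 5.2. -/
theorem constr1_d_le_db_of_no_perfect
    (n k r δ : ℤ) (hr : 0 < r) (hrk : r < k) (hδ : 2 ≤ δ)
    (hkn : k ≤ n - ⌈(k : ℚ) / (r : ℚ)⌉ * (δ - 1))
    (a b m' v fl db : ℤ)
    (ha : a = r * ⌈(k : ℚ) / (r : ℚ)⌉ - k)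
    (hb : b = (r + δ - 1) * ⌈(n : ℚ) / ((r : ℚ) + (δ : ℚ) - 1)⌉ - n)
    (hm : m' = ⌈(n : ℚ) / ((r : ℚ) + (δ : ℚ) - 1)⌉ - 1)
    (hfl : fl = ⌊((r + δ - 1 - b : ℤ) : ℚ) / (m' : ℚ)⌋)
    (hv : v = r + δ - 1 - b - fl * m')
    (hba : a < b)
    (hdb : db = if δ - 1 ≤ (⌈(k : ℚ) / (r : ℚ)⌉ - 1) * fl + min v (⌈(k : ℚ) / (r : ℚ)⌉ - 1)
      then n - k + 1 - ⌈(k : ℚ) / (r : ℚ)⌉ * (δ - 1)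
      else n - k + 1 - min v (⌈(k : ℚ) / (r : ℚ)⌉ - 1)
        - (⌈(k : ℚ) / (r : ℚ)⌉ - 1) * (fl + δ - 1))
    (hnoperfect : ∀ c : Constr1Config,
      (c.n : ℤ) = n → (c.k : ℤ) = k → (c.r : ℤ) = r → (c.δ : ℤ) = δ →
      c.d ≠ n - k + 1 - (⌈(k : ℚ) / (r : ℚ)⌉ - 1) * (δ - 1)) :
    ∀ c : Constr1Config,
      (c.n : ℤ) = n → (c.k : ℤ) = k → (c.r : ℤ) = r → (c.δ : ℤ) = δ →
      c.d ≤ db :=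
  constr1_d_le_db_of_no_perfect_general n k r δ hr b m' v fl db hb hm hfl hv hdb hnoperfect
end

section
/- Let s ≥ 2 be an integer, Σ a finite set with |Σ| = s, n ≥ 1, and let C ⊆ Σ^n be a nonempty code such that for every X ⊆ {1,…,n} there is a natural number ρ(X) with |C_X| = s^{ρ(X)}, where C_X denotes the projection of C onto the coordinates indexed by X (with |C_∅| = 1). Then ρ is the rank function of a matroid on {1,…,n}; that is, for all X, Y ⊆ {1,…,n}: (i) 0 ≤ ρ(X) ≤ |X|; (ii) X ⊆ Y implies ρ(X) ≤ ρ(Y); (iii) ρ(X) + ρ(Y) ≥ ρ(X ∪ Y) + ρ(X ∩ Y). -/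
/-!
Since `|C_X| ≤ |C_{X ∪ {i}}| ≤ s |C_X|` and both are powers of `s`, adding a coordinate raises `ρ`
by `0` or `1`. It raises it by `0` exactly when, on `C`, coordinate `i` is a function of the
coordinates in `X`, and this property passes from `X` to every `Y ⊇ X`. Hence
`ρ (Y ∪ {i}) - ρ Y ≤ ρ (X ∪ {i}) - ρ X` for `X ⊆ Y`, and adding the elements of a third set one at
a time turns this into submodularity.
-/

open Finset

theorem Finset.union_add_le_union_add_of_insert_add_le {α M : Type*} [DecidableEq α]
    [AddCommMonoid M] [PartialOrder M] [IsOrderedCancelAddMonoid M] {f : Finset α → M}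
    (hf : ∀ ⦃X Y : Finset α⦄, X ⊆ Y → ∀ i, f (insert i Y) + f X ≤ f (insert i X) + f Y)
    {X Y : Finset α} (hXY : X ⊆ Y) (Z : Finset α) :
    f (Y ∪ Z) + f X ≤ f (X ∪ Z) + f Y := by
  induction Z using Finset.induction_on with
  | empty => simp only [union_empty, add_comm, le_refl]
  | insert i Z _ ih =>
    rw [union_insert, union_insert]
    have step := hf (union_subset_union_left hXY : X ∪ Z ⊆ Y ∪ Z) i
    refine le_of_add_le_add_right (a := f (X ∪ Z) + f (Y ∪ Z)) ?_
    convert add_le_add step ih using 1 <;> abel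

theorem Finset.submodular_of_insert_add_le {α M : Type*} [DecidableEq α]
    [AddCommMonoid M] [PartialOrder M] [IsOrderedCancelAddMonoid M] {f : Finset α → M}
    (hf : ∀ ⦃X Y : Finset α⦄, X ⊆ Y → ∀ i, f (insert i Y) + f X ≤ f (insert i X) + f Y)
    (X Y : Finset α) : f (X ∪ Y) + f (X ∩ Y) ≤ f X + f Y := by
  have h := union_add_le_union_add_of_insert_add_le hf (X := X ∩ Y) (Y := X) inter_subset_left Y
  rwa [union_eq_right.2 inter_subset_right, add_comm (f Y)] at h

section CodeProjection

variable {ι A : Type*} [DecidableEq A]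

theorem Finset.image_restrict_eq_image_restrict₂ (C : Finset (ι → A)) {X Y : Finset ι}
    (h : X ⊆ Y) :
    C.image X.restrict = (C.image Y.restrict).image (restrict₂ (π := fun _ => A) h) := by
  rw [image_image, restrict₂_comp_restrict]

theorem Finset.card_image_restrict_mono (C : Finset (ι → A)) {X Y : Finset ι} (h : X ⊆ Y) :
    #(C.image X.restrict) ≤ #(C.image Y.restrict) := by
  rw [image_restrict_eq_image_restrict₂ C h]
  exact card_image_le

theorem Finset.card_image_restrict_insert_le [Fintype A] [DecidableEq ι] (C : Finset (ι → A))
    (X : Finset ι) (i : ι) :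
    #(C.image (insert i X).restrict) ≤ #(C.image X.restrict) * Fintype.card A := by
  let split : (↥(insert i X) → A) → (↥X → A) × A :=
    fun g => (restrict₂ (π := fun _ => A) (subset_insert i X) g, g ⟨i, mem_insert_self i X⟩)
  have split_injective : Function.Injective split := by
    intro g g' h
    simp only [split, Prod.ext_iff, restrict₂, funext_iff] at h
    funext ⟨j, hj⟩
    rcases mem_insert.1 hj with rfl | hj
    · exact h.2
    · exact h.1 ⟨j, hj⟩
  calc #(C.image (insert i X).restrict)
      ≤ #(C.image X.restrict ×ˢ (univ : Finset A)) := by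
        refine card_le_card_of_injOn split ?_ split_injective.injOn
        simp only [coe_image, Set.mapsTo_image_iff]
        intro c hc
        exact mem_product.2 ⟨mem_image_of_mem X.restrict hc, mem_univ _⟩
    _ = #(C.image X.restrict) * Fintype.card A := by rw [card_product, card_univ]

theorem Finset.card_image_restrict_insert_eq_iff [DecidableEq ι] (C : Finset (ι → A))
    (X : Finset ι) (i : ι) :
    #(C.image (insert i X).restrict) = #(C.image X.restrict) ↔
      ∀ c ∈ C, ∀ c' ∈ C, Set.EqOn c c' X → c i = c' i := by
  rw [image_restrict_eq_image_restrict₂ C (subset_insert i X), eq_comm, card_image_iff]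
  rw [coe_image]
  constructor
  · intro hinj c hc c' hc' hXcc'
    have := hinj ⟨c, hc, rfl⟩ ⟨c', hc', rfl⟩ (funext fun j => hXcc' j.2)
    exact congrFun this ⟨i, mem_insert_self i X⟩
  · rintro hdet _ ⟨c, hc, rfl⟩ _ ⟨c', hc', rfl⟩ h
    have hXcc' : Set.EqOn c c' X := fun j hj => congrFun h ⟨j, hj⟩
    funext ⟨j, hj⟩
    rcases mem_insert.1 hj with rfl | hj
    · exact hdet c hc c' hc' hXcc'
    · exact hXcc' hj
  
end CodeProjection

namespace AlmostAffine

variable {ι A : Type*} [DecidableEq A] {s : ℕ} {C : Finset (ι → A)} {ρ : Finset ι → ℕ}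

theorem rank_mono (hs : 2 ≤ s) (hρ : ∀ X, #(C.image X.restrict) = s ^ ρ X)
    {X Y : Finset ι} (h : X ⊆ Y) : ρ X ≤ ρ Y := by
  have hcard := card_image_restrict_mono C h
  rwa [hρ, hρ, Nat.pow_le_pow_iff_right hs] at hcard

theorem rank_le_card [Fintype A] (hA : Fintype.card A = s) (hs : 2 ≤ s)
    (hρ : ∀ X, #(C.image X.restrict) = s ^ ρ X) (X : Finset ι) : ρ X ≤ #X := by
  classical
  have hcard := card_le_univ (C.image X.restrict)
  rwa [hρ, Fintype.card_fun, Fintype.card_coe, hA, Nat.pow_le_pow_iff_right hs] at hcard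

theorem rank_insert_le_succ [DecidableEq ι] [Fintype A] (hA : Fintype.card A = s) (hs : 2 ≤ s)
    (hρ : ∀ X, #(C.image X.restrict) = s ^ ρ X) (X : Finset ι) (i : ι) :
    ρ (insert i X) ≤ ρ X + 1 := by
  have hcard := card_image_restrict_insert_le C X i
  rwa [hρ, hρ, hA, ← pow_succ, Nat.pow_le_pow_iff_right hs] at hcard

theorem rank_insert_add_le [DecidableEq ι] [Fintype A] (hA : Fintype.card A = s) (hs : 2 ≤ s)
    (hρ : ∀ X, #(C.image X.restrict) = s ^ ρ X) {X Y : Finset ι} (hXY : X ⊆ Y) (i : ι) :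
    ρ (insert i Y) + ρ X ≤ ρ (insert i X) + ρ Y := by
  rcases (rank_mono hs hρ (subset_insert i X)).eq_or_lt with hX | hX
  · -- coordinate `i` is determined by `X` on `C`, hence by `Y`
    have hdet := (card_image_restrict_insert_eq_iff C X i).1 (by rw [hρ, hρ, hX])
    have hY : #(C.image (insert i Y).restrict) = #(C.image Y.restrict) :=
      (card_image_restrict_insert_eq_iff C Y i).2
        fun c hc c' hc' h => hdet c hc c' hc' (h.mono (coe_subset.2 hXY))
    rw [hρ, hρ] at hY
    have := Nat.pow_right_injective hs hY
    omega
  · have := rank_insert_le_succ hA hs hρ Y i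
    omega

end AlmostAffine

theorem almost_affine_code_gives_matroid_general
    (s n : ℕ) (hs : 2 ≤ s)
    (A : Type) [Fintype A] [DecidableEq A] (hcard : Fintype.card A = s)
    (C : Finset (Fin n → A))
    (ρ : Finset (Fin n) → ℕ)
    (hρ : ∀ X : Finset (Fin n),
      (C.image (fun c => fun i : ↥X => c ↑i)).card = s ^ ρ X) :
    (∀ X : Finset (Fin n), ρ X ≤ X.card) ∧
    (∀ X Y : Finset (Fin n), X ⊆ Y → ρ X ≤ ρ Y) ∧
    (∀ X Y : Finset (Fin n), ρ (X ∪ Y) + ρ (X ∩ Y) ≤ ρ X + ρ Y) :=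
  ⟨AlmostAffine.rank_le_card hcard hs hρ, fun _ _ => AlmostAffine.rank_mono hs hρ,
    submodular_of_insert_add_le fun _ _ hXY i => AlmostAffine.rank_insert_add_le hcard hs hρ hXY i⟩

/-- Every almost affine code induces a matroid: if `C ⊆ Σ^n` is nonempty and for every
coordinate set `X` the projection `C_X` has cardinality `s ^ ρ(X)`, then `ρ` satisfies
the rank axioms of a matroid on `{1,…,n}`. -/
theorem almost_affine_code_gives_matroid
    (s n : ℕ) (hs : 2 ≤ s) (hn : 1 ≤ n)
    (A : Type) [Fintype A] [DecidableEq A] (hcard : Fintype.card A = s)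
    (C : Finset (Fin n → A)) (hC : C.Nonempty)
    (ρ : Finset (Fin n) → ℕ)
    (hρ : ∀ X : Finset (Fin n),
      (C.image (fun c => fun i : ↥X => c ↑i)).card = s ^ ρ X) :
    (∀ X : Finset (Fin n), ρ X ≤ X.card) ∧
    (∀ X Y : Finset (Fin n), X ⊆ Y → ρ X ≤ ρ Y) ∧
    (∀ X Y : Finset (Fin n), ρ (X ∪ Y) + ρ (X ∩ Y) ≤ ρ X + ρ Y) :=
  almost_affine_code_gives_matroid_general s n hs A hcard C ρ hρ
end

section
/- Let M be a matroid on a finite ground set E with n = |E| and rank k = r_M(E) > 0, and suppose that E is a union of circuits of M (so E is the maximal cyclic flat of M). Then min{|X| : X ⊆ E and r_M(E ∖ X) < k} = n − k + 1 − max{|Z| − r_M(Z) : Z is a cyclic flat of M with Z ≠ E such that no cyclic flat Y of M satisfies Z ⊊ Y ⊊ E}. -/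
open scoped BigOperators

attribute [local instance] Classical.propDecidable

/-- A matroid on a finite ground set `E`, given by its rank function on `Finset`s,
satisfying the rank axioms: boundedness by cardinality, monotonicity and
submodularity (for subsets of the ground set). -/
structure FinMatroid (α : Type) where
  /-- the ground set -/
  E : Finset α
  /-- the rank function -/
  rk : Finset α → ℕ
  rk_le_card : ∀ X, X ⊆ E → rk X ≤ X.card
  rk_mono : ∀ X Y, X ⊆ Y → Y ⊆ E → rk X ≤ rk Y
  rk_submodular : ∀ X Y, X ⊆ E → Y ⊆ E → rk (X ∪ Y) + rk (X ∩ Y) ≤ rk X + rk Y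

namespace FinMatroid

variable {α : Type} [DecidableEq α] (M : FinMatroid α)

/-- A circuit: a minimal dependent subset of the ground set. -/
def IsCircuit (C : Finset α) : Prop :=
  C ⊆ M.E ∧ M.rk C < C.card ∧ ∀ X, X ⊂ C → M.rk X = X.card

/-- A cyclic set: a union of circuits, i.e. every element lies in a circuit
contained in the set. -/
def IsCyclic (X : Finset α) : Prop :=
  X ⊆ M.E ∧ ∀ x ∈ X, ∃ C, C ⊆ X ∧ M.IsCircuit C ∧ x ∈ C

/-- The closure of a set: all ground set elements whose insertion does not
increase the rank. -/
def closure (X : Finset α) : Finset α :=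
  M.E.filter (fun y => M.rk (insert y X) = M.rk X)

/-- A flat: a subset of the ground set equal to its closure. -/
def IsFlat (X : Finset α) : Prop :=
  X ⊆ M.E ∧ M.closure X = X

/-- A cyclic flat: a flat that is also a union of circuits. -/
def IsCyclicFlat (X : Finset α) : Prop :=
  M.IsFlat X ∧ M.IsCyclic X

end FinMatroid

/-!
Write `k = r(E)`. Removing `X` drops the rank iff `E \ X` lies in a proper flat, so the
minimum of `|X|` is `n - |F|` for the largest set `F` of rank `k - 1`, i.e.
`n - (k - 1) - η`, where `η` is the largest nullity of a set of rank `< k`.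
Nullity does not drop when passing to the closure, nor from a flat to its cyclic part
(the non-coloops carry all the nullity), so `η` is attained on a proper cyclic flat, and
then on a coatom above it since nullity is monotone. Conversely a coatom `W` has rank
`< k`, and enlarging `W` to a set of rank `k - 1` does not lower its nullity.
-/

namespace FinMatroid

variable {α : Type} {M : FinMatroid α} {X Y Z : Finset α} {x y : α}

def nullity (M : FinMatroid α) (X : Finset α) : ℕ := X.card - M.rk X

lemma nullity_le_card : M.nullity X ≤ X.card := Nat.sub_le _ _

lemma rk_empty : M.rk ∅ = 0 :=
  Nat.le_zero.mp (M.rk_le_card ∅ (Finset.empty_subset _))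

lemma exists_isCircuit_subset {D : Finset α} (hD : D ⊆ M.E) (hdep : M.rk D < D.card) :
    ∃ C ⊆ D, M.IsCircuit C := by
  obtain ⟨C, hCP, hCmin⟩ := Finset.exists_min_image
    (D.powerset.filter fun C => M.rk C < C.card) Finset.card
    ⟨D, Finset.mem_filter.mpr ⟨Finset.mem_powerset_self D, hdep⟩⟩
  obtain ⟨hCD, hCdep⟩ := Finset.mem_filter.mp hCP
  rw [Finset.mem_powerset] at hCD
  refine ⟨C, hCD, hCD.trans hD, hCdep, fun X hXC => ?_⟩
  refine le_antisymm (M.rk_le_card X (hXC.subset.trans (hCD.trans hD))) (not_lt.mp fun h => ?_)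
  have := hCmin X (Finset.mem_filter.mpr
    ⟨Finset.mem_powerset.mpr (hXC.subset.trans hCD), h⟩)
  exact absurd (Finset.card_lt_card hXC) (not_lt.mpr this)

variable [DecidableEq α]

def IsCyclicFlatCoatom (M : FinMatroid α) (Z : Finset α) : Prop :=
  M.IsCyclicFlat Z ∧ Z ≠ M.E ∧ ∀ Y, M.IsCyclicFlat Y → Z ⊂ Y → Y = M.E

lemma rk_union_add_rk_inter_le (hX : X ⊆ M.E) (hY : Y ⊆ M.E) :
    M.rk (X ∪ Y) + M.rk (X ∩ Y) ≤ M.rk X + M.rk Y := by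
  -- the field `rk_submodular` uses the classical `DecidableEq` instance
  convert M.rk_submodular X Y hX hY using 4 <;> congr!

lemma rk_insert_le_add_one (hX : X ⊆ M.E) (hy : y ∈ M.E) :
    M.rk (insert y X) ≤ M.rk X + 1 := by
  have h := rk_union_add_rk_inter_le (Finset.singleton_subset_iff.mpr hy) hX
  have h1 : M.rk {y} ≤ 1 := M.rk_le_card {y} (Finset.singleton_subset_iff.mpr hy)
  rw [← Finset.insert_eq] at h
  omega

lemma rk_union_le_add_card (hX : X ⊆ M.E) (hY : Y ⊆ M.E) :
    M.rk (X ∪ Y) ≤ M.rk X + Y.card := by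
  induction Y using Finset.induction_on with
  | empty => simp
  | @insert b Y hb ih =>
    have hYE := (Finset.subset_insert b Y).trans hY
    rw [Finset.union_insert, Finset.card_insert_of_notMem hb]
    have := rk_insert_le_add_one (Finset.union_subset hX hYE) (hY (Finset.mem_insert_self b Y))
    have := ih hYE
    omega

lemma nullity_mono (hXY : X ⊆ Y) (hY : Y ⊆ M.E) : M.nullity X ≤ M.nullity Y := by
  have h := rk_union_le_add_card (hXY.trans hY) ((Finset.sdiff_subset (s := Y) (t := X)).trans hY)
  rw [Finset.union_sdiff_of_subset hXY, Finset.card_sdiff_of_subset hXY] at h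
  have := Finset.card_le_card hXY
  have := M.rk_le_card X (hXY.trans hY)
  unfold nullity
  omega

lemma card_add_nullity_add_rk_sdiff (hX : X ⊆ M.E) :
    X.card + M.nullity (M.E \ X) + M.rk (M.E \ X) = M.E.card := by
  have := M.rk_le_card _ (Finset.sdiff_subset (s := M.E) (t := X))
  have := Finset.card_sdiff_add_card_eq_card hX
  unfold nullity
  omega

lemma rk_insert_eq_of_subset (hXY : X ⊆ Y) (hY : Y ⊆ M.E) (hy : y ∈ M.E)
    (h : M.rk (insert y X) = M.rk X) : M.rk (insert y Y) = M.rk Y := by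
  have hsub := rk_union_add_rk_inter_le (Finset.insert_subset hy (hXY.trans hY)) hY
  rw [Finset.insert_union, Finset.union_eq_right.mpr hXY, h] at hsub
  have h1 : M.rk X ≤ M.rk (insert y X ∩ Y) :=
    M.rk_mono _ _ (Finset.subset_inter (Finset.subset_insert y X) hXY)
      (Finset.inter_subset_right.trans hY)
  have h2 : M.rk Y ≤ M.rk (insert y Y) :=
    M.rk_mono _ _ (Finset.subset_insert y Y) (Finset.insert_subset hy hY)
  omega

lemma mem_closure_iff : y ∈ M.closure X ↔ y ∈ M.E ∧ M.rk (insert y X) = M.rk X :=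
  Finset.mem_filter

lemma closure_subset_ground : M.closure X ⊆ M.E := Finset.filter_subset _ _

lemma subset_closure (hX : X ⊆ M.E) : X ⊆ M.closure X := fun x hx =>
  mem_closure_iff.mpr ⟨hX hx, by rw [Finset.insert_eq_self.mpr hx]⟩

lemma closure_mono (hXY : X ⊆ Y) (hY : Y ⊆ M.E) : M.closure X ⊆ M.closure Y := by
  intro y hy
  obtain ⟨hyE, hyX⟩ := mem_closure_iff.mp hy
  exact mem_closure_iff.mpr ⟨hyE, rk_insert_eq_of_subset hXY hY hyE hyX⟩

lemma rk_union_eq_of_subset_closure {S : Finset α} (hX : X ⊆ M.E) (hS : S ⊆ M.closure X) :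
    M.rk (X ∪ S) = M.rk X := by
  induction S using Finset.induction_on with
  | empty => simp
  | @insert s S _ ih =>
    have hSX := (Finset.subset_insert s S).trans hS
    obtain ⟨hsE, hs⟩ := mem_closure_iff.mp (hS (Finset.mem_insert_self s S))
    rw [Finset.union_insert, ← ih hSX]
    exact rk_insert_eq_of_subset Finset.subset_union_left
      (Finset.union_subset hX (hSX.trans closure_subset_ground)) hsE hs

lemma rk_closure (hX : X ⊆ M.E) : M.rk (M.closure X) = M.rk X := by
  rw [← rk_union_eq_of_subset_closure hX subset_rfl,
    Finset.union_eq_right.mpr (subset_closure hX)]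

lemma isFlat_closure (hX : X ⊆ M.E) : M.IsFlat (M.closure X) := by
  refine ⟨closure_subset_ground, subset_antisymm (fun y hy => ?_)
    (subset_closure closure_subset_ground)⟩
  obtain ⟨hyE, hy⟩ := mem_closure_iff.mp hy
  refine mem_closure_iff.mpr ⟨hyE, le_antisymm ?_ (M.rk_mono _ _ (Finset.subset_insert y X)
    (Finset.insert_subset hyE hX))⟩
  calc M.rk (insert y X)
      ≤ M.rk (insert y (M.closure X)) :=
        M.rk_mono _ _ (Finset.insert_subset_insert y (subset_closure hX))
          (Finset.insert_subset hyE closure_subset_ground)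
    _ = M.rk X := by rw [hy, rk_closure hX]

lemma IsFlat.rk_lt (hZ : M.IsFlat Z) (hne : Z ≠ M.E) : M.rk Z < M.rk M.E := by
  obtain ⟨e, heE, heZ⟩ := Finset.exists_of_ssubset (hZ.1.ssubset_of_ne hne)
  have hne : M.rk (insert e Z) ≠ M.rk Z := fun h =>
    heZ (hZ.2 ▸ mem_closure_iff.mpr ⟨heE, h⟩)
  have := M.rk_mono _ _ (Finset.subset_insert e Z) (Finset.insert_subset heE hZ.1)
  have := M.rk_mono _ _ (Finset.insert_subset heE hZ.1) subset_rfl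
  omega

lemma rk_eq_card_of_subset (hY : Y ⊆ M.E) (hYi : M.rk Y = Y.card) (hXY : X ⊆ Y) :
    M.rk X = X.card := by
  have h := rk_union_le_add_card (hXY.trans hY) ((Finset.sdiff_subset (s := Y) (t := X)).trans hY)
  rw [Finset.union_sdiff_of_subset hXY, Finset.card_sdiff_of_subset hXY, hYi] at h
  have := Finset.card_le_card hXY
  have := M.rk_le_card X (hXY.trans hY)
  omega

/-- A basis of `Y`: an independent subset of maximum size. -/
lemma exists_rk_eq_card_rk_eq (hY : Y ⊆ M.E) :
    ∃ B ⊆ Y, M.rk B = B.card ∧ M.rk B = M.rk Y := by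
  obtain ⟨B, hBP, hBmax⟩ := Finset.exists_max_image
    (Y.powerset.filter fun B => M.rk B = B.card) Finset.card
    ⟨∅, Finset.mem_filter.mpr ⟨Finset.empty_mem_powerset Y, rk_empty⟩⟩
  obtain ⟨hBY, hBi⟩ := Finset.mem_filter.mp hBP
  rw [Finset.mem_powerset] at hBY
  have hBE := hBY.trans hY
  have hYcl : Y ⊆ M.closure B := fun y hy => by
    by_cases hyB : y ∈ B
    · exact subset_closure hBE hyB
    have hyE := hY hy
    have hdep : M.rk (insert y B) ≠ (insert y B).card := fun h => by
      have := hBmax _ (Finset.mem_filter.mpr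
        ⟨Finset.mem_powerset.mpr (Finset.insert_subset hy hBY), h⟩)
      rw [Finset.card_insert_of_notMem hyB] at this
      omega
    rw [Finset.card_insert_of_notMem hyB] at hdep
    have := rk_insert_le_add_one hBE hyE
    have := M.rk_mono _ _ (Finset.subset_insert y B) (Finset.insert_subset hyE hBE)
    exact mem_closure_iff.mpr ⟨hyE, by omega⟩
  refine ⟨B, hBY, hBi, le_antisymm (M.rk_mono _ _ hBY hY) ?_⟩
  calc M.rk Y ≤ M.rk (B ∪ Y) :=
        M.rk_mono _ _ Finset.subset_union_right (Finset.union_subset hBE hY)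
    _ = M.rk B := rk_union_eq_of_subset_closure hBE hYcl

/-- An element that is not a coloop of `X` lies in a circuit inside `X`: adjoin it to a
basis of the rest. -/
lemma exists_isCircuit_of_rk_erase (hX : X ⊆ M.E) (hx : x ∈ X)
    (h : M.rk (X.erase x) = M.rk X) : ∃ C ⊆ X, M.IsCircuit C ∧ x ∈ C := by
  have hXx : X.erase x ⊆ M.E := (Finset.erase_subset x X).trans hX
  obtain ⟨B, hBX, hBi, hBrk⟩ := exists_rk_eq_card_rk_eq hXx
  have hxB : x ∉ B := fun hxB => Finset.notMem_erase x X (hBX hxB)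
  have hDX : insert x B ⊆ X := Finset.insert_subset hx (hBX.trans (Finset.erase_subset x X))
  have hdep : M.rk (insert x B) < (insert x B).card := by
    have := M.rk_mono _ _ hDX hX
    rw [Finset.card_insert_of_notMem hxB]
    omega
  obtain ⟨C, hCD, hC⟩ := exists_isCircuit_subset (hDX.trans hX) hdep
  refine ⟨C, hCD.trans hDX, hC, by_contra fun hxC => ?_⟩
  have hCB : C ⊆ B := fun c hc =>
    (Finset.mem_insert.mp (hCD hc)).resolve_left fun hcx => hxC (hcx ▸ hc)
  exact hC.2.1.ne (rk_eq_card_of_subset (hBX.trans hXx) hBi hCB)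

/-- A smallest subset of a flat `G` with nullity at least that of `G` is a cyclic flat:
deleting a coloop or adding a closure element would contradict minimality or monotonicity. -/
lemma IsFlat.exists_isCyclicFlat_subset_nullity_le {G : Finset α} (hG : M.IsFlat G) :
    ∃ Z ⊆ G, M.IsCyclicFlat Z ∧ M.nullity G ≤ M.nullity Z := by
  obtain ⟨Z, hZP, hZmin⟩ := Finset.exists_min_image
    (G.powerset.filter fun Z => M.nullity G ≤ M.nullity Z) Finset.card
    ⟨G, Finset.mem_filter.mpr ⟨Finset.mem_powerset_self G, le_rfl⟩⟩
  obtain ⟨hZG, hZnull⟩ := Finset.mem_filter.mp hZP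
  rw [Finset.mem_powerset] at hZG
  have hZE := hZG.trans hG.1
  have hZrk := M.rk_le_card Z hZE
  have hcyclic : M.IsCyclic Z := by
    refine ⟨hZE, fun x hx => exists_isCircuit_of_rk_erase hZE hx ?_⟩
    have hcard := Finset.card_erase_of_mem hx
    have hle := M.rk_mono _ _ (Finset.erase_subset x Z) hZE
    have hge : M.rk Z ≤ M.rk (Z.erase x) + 1 := by
      have := rk_insert_le_add_one ((Finset.erase_subset x Z).trans hZE) (hZE hx)
      rwa [Finset.insert_erase hx] at this
    by_contra hne
    have := hZmin _ (Finset.mem_filter.mpr ⟨Finset.mem_powerset.mpr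
      ((Finset.erase_subset x Z).trans hZG), by unfold nullity at hZnull ⊢; omega⟩)
    have := Finset.card_pos.mpr ⟨x, hx⟩
    omega
  have hflat : M.closure Z ⊆ Z := fun y hy => by
    have hyG : y ∈ G := hG.2 ▸ closure_mono hZG hG.1 hy
    by_contra hyZ
    have hmono := nullity_mono (Finset.insert_subset hyG hZG) hG.1
    rw [nullity, (mem_closure_iff.mp hy).2, Finset.card_insert_of_notMem hyZ] at hmono
    have : M.nullity Z = Z.card - M.rk Z := rfl
    omega
  exact ⟨Z, hZG, ⟨⟨hZE, subset_antisymm hflat (subset_closure hZE)⟩, hcyclic⟩, hZnull⟩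

lemma IsCyclicFlat.exists_isCyclicFlatCoatom_superset (hZ : M.IsCyclicFlat Z) (hne : Z ≠ M.E) :
    ∃ W, M.IsCyclicFlatCoatom W ∧ Z ⊆ W := by
  obtain ⟨W, hWP, hWmax⟩ := Finset.exists_max_image
    (M.E.powerset.filter fun W => M.IsCyclicFlat W ∧ W ≠ M.E ∧ Z ⊆ W) Finset.card
    ⟨Z, Finset.mem_filter.mpr ⟨Finset.mem_powerset.mpr hZ.1.1, hZ, hne, subset_rfl⟩⟩
  obtain ⟨-, hW, hWne, hZW⟩ := Finset.mem_filter.mp hWP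
  refine ⟨W, ⟨hW, hWne, fun Y hY hWY => by_contra fun hYne => ?_⟩, hZW⟩
  have := hWmax Y (Finset.mem_filter.mpr
    ⟨Finset.mem_powerset.mpr hY.1.1, hY, hYne, hZW.trans hWY.subset⟩)
  exact absurd (Finset.card_lt_card hWY) (not_lt.mpr this)

lemma exists_isCyclicFlatCoatom_nullity_le (hY : Y ⊆ M.E) (hrk : M.rk Y < M.rk M.E) :
    ∃ W, M.IsCyclicFlatCoatom W ∧ M.nullity Y ≤ M.nullity W := by
  obtain ⟨Z, hZG, hZ, hnull⟩ := (isFlat_closure hY).exists_isCyclicFlat_subset_nullity_le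
  have hZrk : M.rk Z < M.rk M.E :=
    (M.rk_mono _ _ hZG closure_subset_ground).trans_lt (rk_closure hY ▸ hrk)
  obtain ⟨W, hW, hZW⟩ := hZ.exists_isCyclicFlatCoatom_superset (by rintro rfl; omega)
  refine ⟨W, hW, ?_⟩
  calc M.nullity Y ≤ M.nullity (M.closure Y) :=
        nullity_mono (subset_closure hY) closure_subset_ground
    _ ≤ M.nullity Z := hnull
    _ ≤ M.nullity W := nullity_mono hZW hW.1.1.1

lemma exists_superset_rk_eq {j : ℕ} (hY : Y ⊆ M.E) (hYj : M.rk Y ≤ j) (hjE : j ≤ M.rk M.E) :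
    ∃ F, Y ⊆ F ∧ F ⊆ M.E ∧ M.rk F = j := by
  obtain ⟨F, hFP, hFmax⟩ := Finset.exists_max_image
    (M.E.powerset.filter fun F => Y ⊆ F ∧ M.rk F ≤ j) Finset.card
    ⟨Y, Finset.mem_filter.mpr ⟨Finset.mem_powerset.mpr hY, subset_rfl, hYj⟩⟩
  obtain ⟨hFE, hYF, hFj⟩ := Finset.mem_filter.mp hFP
  rw [Finset.mem_powerset] at hFE
  refine ⟨F, hYF, hFE, le_antisymm hFj (not_lt.mp fun hlt => ?_)⟩
  obtain ⟨e, heE, heF⟩ : ∃ e ∈ M.E, e ∉ F := Finset.not_subset.mp fun hEF => by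
    rw [subset_antisymm hFE hEF] at hlt
    omega
  have := hFmax (insert e F) (Finset.mem_filter.mpr ⟨Finset.mem_powerset.mpr
    (Finset.insert_subset heE hFE), hYF.trans (Finset.subset_insert e F),
    (rk_insert_le_add_one hFE heE).trans hlt⟩)
  rw [Finset.card_insert_of_notMem heF] at this
  omega

/-- Extend `W` to a set `F` of rank `r(E) - 1` and remove `X = E \ F`. -/
lemma exists_card_add_nullity_le {W : Finset α} (hW : W ⊆ M.E) (hrk : M.rk W < M.rk M.E) :
    ∃ X ⊆ M.E, M.rk (M.E \ X) < M.rk M.E ∧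
      X.card + M.nullity W + M.rk M.E ≤ M.E.card + 1 := by
  obtain ⟨F, hWF, hFE, hF⟩ :=
    exists_superset_rk_eq hW (Nat.le_sub_one_of_lt hrk) (Nat.sub_le _ 1)
  have hX := card_add_nullity_add_rk_sdiff (Finset.sdiff_subset (s := M.E) (t := F))
  rw [Finset.sdiff_sdiff_eq_self hFE] at hX
  have := nullity_mono hWF hFE
  exact ⟨M.E \ F, Finset.sdiff_subset, by rw [Finset.sdiff_sdiff_eq_self hFE]; omega, by omega⟩

end FinMatroid

open FinMatroid in
theorem min_card_eq_of_cyclic_ground_general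
    {α : Type} [DecidableEq α] (M : FinMatroid α)
    (hk : 0 < M.rk M.E) :
    (↑(sInf {c : ℕ | ∃ X : Finset α, X ⊆ M.E ∧ M.rk (M.E \ X) < M.rk M.E ∧ X.card = c}) : ℤ) =
      (M.E.card : ℤ) - (M.rk M.E : ℤ) + 1 -
        (↑(sSup {e : ℕ | ∃ Z : Finset α, M.IsCyclicFlat Z ∧ Z ≠ M.E ∧
          (∀ Y : Finset α, M.IsCyclicFlat Y → Z ⊂ Y → Y = M.E) ∧
          Z.card - M.rk Z = e}) : ℤ) := by
  set S := {c : ℕ | ∃ X : Finset α, X ⊆ M.E ∧ M.rk (M.E \ X) < M.rk M.E ∧ X.card = c}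
  set T := {e : ℕ | ∃ Z : Finset α, M.IsCyclicFlat Z ∧ Z ≠ M.E ∧
    (∀ Y : Finset α, M.IsCyclicFlat Y → Z ⊂ Y → Y = M.E) ∧ Z.card - M.rk Z = e}
  have hTbdd : BddAbove T := ⟨M.E.card, by
    rintro _ ⟨Z, hZ, -, -, rfl⟩
    exact nullity_le_card.trans (Finset.card_le_card hZ.1.1)⟩
  obtain ⟨W₀, hW₀, -⟩ := exists_isCyclicFlatCoatom_nullity_le (Finset.empty_subset M.E)
    (by rwa [rk_empty])
  have hTne : T.Nonempty := ⟨_, W₀, hW₀.1, hW₀.2.1, hW₀.2.2, rfl⟩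
  obtain ⟨W, hW, hWne, -, hWT⟩ := Nat.sSup_mem hTne hTbdd
  obtain ⟨X, hXE, hXrk, hX⟩ := exists_card_add_nullity_le hW.1.1 (hW.1.rk_lt hWne)
  have hSX : sInf S ≤ X.card := Nat.sInf_le ⟨X, hXE, hXrk, rfl⟩
  have hSne : S.Nonempty := ⟨_, M.E, subset_rfl, by rwa [Finset.sdiff_self, rk_empty], rfl⟩
  obtain ⟨X', hX'E, hX'rk, hX'S⟩ := Nat.sInf_mem hSne
  obtain ⟨W', hW', hnull⟩ := exists_isCyclicFlatCoatom_nullity_le Finset.sdiff_subset hX'rk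
  have hW'T : M.nullity W' ≤ sSup T := le_csSup hTbdd ⟨W', hW'.1, hW'.2.1, hW'.2.2, rfl⟩
  have hX' := card_add_nullity_add_rk_sdiff hX'E
  unfold nullity at hX hnull hW'T hX'
  omega

/-- For a matroid whose ground set `E` is a union of circuits and has rank `k > 0`,
`min{|X| : rk(E \ X) < k} = n - k + 1 - max{|Z| - rk Z : Z a coatom of the lattice of
cyclic flats}`. -/
theorem min_card_eq_of_cyclic_ground
    {α : Type} [DecidableEq α] (M : FinMatroid α)
    (hk : 0 < M.rk M.E) (hcyc : M.IsCyclic M.E) :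
    (↑(sInf {c : ℕ | ∃ X : Finset α, X ⊆ M.E ∧ M.rk (M.E \ X) < M.rk M.E ∧ X.card = c}) : ℤ) =
      (M.E.card : ℤ) - (M.rk M.E : ℤ) + 1 -
        (↑(sSup {e : ℕ | ∃ Z : Finset α, M.IsCyclicFlat Z ∧ Z ≠ M.E ∧
          (∀ Y : Finset α, M.IsCyclicFlat Y → Z ⊂ Y → Y = M.E) ∧
          Z.card - M.rk Z = e}) : ℤ) :=
  min_card_eq_of_cyclic_ground_general M hk
end

section
/- Let M be a matroid on a finite ground set, and let X and Y be cyclic flats of M with X ⊊ Y. Then 0 < r_M(Y) − r_M(X) < |Y| − |X|. -/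
open scoped BigOperators

attribute [local instance] Classical.propDecidable

/-! Since `X` is a flat, any element of `Y \ X` raises the rank of `X`. Since `Y` is cyclic,
some circuit `C ⊆ Y` is not contained in `X`; then `X ∩ C ⊊ C` is independent, so by
submodularity the nullity `|·| - rk` of `X ∪ C` exceeds that of `X`, and nullity is monotone
from `X ∪ C` up to `Y`. -/

namespace FinMatroid

variable {α : Type} (M : FinMatroid α) {X Y C : Finset α}

theorem IsFlat.rk_lt_of_ssubset [DecidableEq α] (hX : M.IsFlat X) (hXY : X ⊂ Y)
    (hY : Y ⊆ M.E) :
    M.rk X < M.rk Y := by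
  obtain ⟨y, hyY, hyX⟩ := Finset.exists_of_ssubset hXY
  have hyXY : insert y X ⊆ Y := Finset.insert_subset hyY hXY.subset
  have hne : M.rk (insert y X) ≠ M.rk X := fun h =>
    hyX (hX.2 ▸ Finset.mem_filter.mpr ⟨hY hyY, h⟩)
  calc M.rk X < M.rk (insert y X) :=
        (M.rk_mono _ _ (Finset.subset_insert y X) (hyXY.trans hY)).lt_of_ne' hne
    _ ≤ M.rk Y := M.rk_mono _ _ hyXY hY

theorem rk_add_card_le_of_subset (hXY : X ⊆ Y) (hY : Y ⊆ M.E) :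
    M.rk Y + X.card ≤ M.rk X + Y.card := by
  have hsub := M.rk_submodular X (Y \ X) (hXY.trans hY) (Finset.sdiff_subset.trans hY)
  rw [Finset.union_sdiff_of_subset hXY] at hsub
  have hrk := M.rk_le_card (Y \ X) (Finset.sdiff_subset.trans hY)
  have hcard := Finset.card_sdiff_add_card_eq_card hXY
  omega

theorem IsCircuit.rk_union_add_card_lt (hC : M.IsCircuit C) (hX : X ⊆ M.E) (hCX : ¬C ⊆ X) :
    M.rk (X ∪ C) + X.card < M.rk X + (X ∪ C).card := by
  obtain ⟨hCE, hCrk, hCind⟩ := hC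
  have hXC : M.rk (X ∩ C) = (X ∩ C).card :=
    hCind _ (Finset.ssubset_iff_subset_ne.mpr ⟨Finset.inter_subset_right,
      fun h => hCX (h ▸ Finset.inter_subset_left)⟩)
  have hsub := M.rk_submodular X C hX hCE
  have hcard := Finset.card_union_add_card_inter X C
  omega

theorem rk_add_card_lt_of_isCircuit (hXY : X ⊆ Y) (hY : Y ⊆ M.E) (hC : M.IsCircuit C)
    (hCY : C ⊆ Y) (hCX : ¬C ⊆ X) : M.rk Y + X.card < M.rk X + Y.card := by
  have hXCY : X ∪ C ⊆ Y := Finset.union_subset hXY hCY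
  have := hC.rk_union_add_card_lt M (hXY.trans hY) hCX
  have := M.rk_add_card_le_of_subset hXCY hY
  omega

theorem IsCyclic.exists_isCircuit_not_subset (hY : M.IsCyclic Y) (hXY : X ⊂ Y) :
    ∃ C, C ⊆ Y ∧ M.IsCircuit C ∧ ¬C ⊆ X := by
  obtain ⟨y, hyY, hyX⟩ := Finset.exists_of_ssubset hXY
  obtain ⟨C, hCY, hC, hyC⟩ := hY.2 y hyY
  exact ⟨C, hCY, hC, fun h => hyX (h hyC)⟩

end FinMatroid

/-- Axiom (Z2) of the lattice of cyclic flats: for cyclic flats `X ⊊ Y`,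
`0 < rk Y - rk X < |Y| - |X|`. -/
theorem cyclicFlat_rank_strict
    {α : Type} [DecidableEq α] (M : FinMatroid α) (X Y : Finset α)
    (hX : M.IsCyclicFlat X) (hY : M.IsCyclicFlat Y) (hXY : X ⊂ Y) :
    0 < (M.rk Y : ℤ) - (M.rk X : ℤ) ∧
      (M.rk Y : ℤ) - (M.rk X : ℤ) < (Y.card : ℤ) - (X.card : ℤ) := by
  have hYE : Y ⊆ M.E := hY.1.1
  have hrk := hX.1.rk_lt_of_ssubset M hXY hYE
  obtain ⟨C, hCY, hC, hCX⟩ := hY.2.exists_isCircuit_not_subset M hXY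
  have hnull := M.rk_add_card_lt_of_isCircuit hXY.subset hYE hC hCY hCX
  omega
end
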